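/- Let F be a suc-stable fragment, k ∈ ℕ, and for each i ∈ [1,k] let ⟨u_i,α_i⟩ and ⟨v_i,β_i⟩ be V_i-valuations, where the finite variable sets V_1, …, V_k are mutually disjoint. If Duplicator has a winning strategy in the configuration (F, ⟨u_i,α_i⟩, ⟨v_i,β_i⟩) for each i ∈ [1,k], then Duplicator has a winning strategy in the configuration (F, ⟨u_1⋯u_k, α_1∪⋯∪α_k⟩, ⟨v_1⋯v_k, β_1∪⋯∪β_k⟩). -/

import Mathlib

set_option autoImplicit false

instance instCountableLex {α : Type*} [Countable α] : Countable (Lex α) :=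
  inferInstanceAs (Countable α)

namespace EFGames

/-! ### Syntax of first-order logic over words.
Letters of the alphabet `Λ` and first-order variables are represented by natural numbers. -/

inductive FOForm : Type where
  | top | bot | empt
  | eq (x y : ℕ) | lab (x a : ℕ)
  | lt (x y : ℕ) | le (x y : ℕ) | suc (x y : ℕ)
  | fmin (x : ℕ) | fmax (x : ℕ)
  | not (φ : FOForm) | or (φ ψ : FOForm) | and (φ ψ : FOForm)
  | ex (x : ℕ) (φ : FOForm) | all (x : ℕ) (φ : FOForm)

/-- Free variables of a formula. -/
def FOForm.FV : FOForm → Finset ℕ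
  | .top | .bot | .empt => ∅
  | .eq x y | .lt x y | .le x y | .suc x y => {x, y}
  | .lab x _ | .fmin x | .fmax x => {x}
  | .not φ => φ.FV
  | .or φ ψ | .and φ ψ => φ.FV ∪ ψ.FV
  | .ex x φ | .all x φ => φ.FV.erase x

/-- Quantifier depth. -/
def FOForm.qd : FOForm → ℕ
  | .not φ => φ.qd
  | .or φ ψ | .and φ ψ => max φ.qd ψ.qd
  | .ex _ φ | .all _ φ => φ.qd + 1
  | _ => 0

/-- All variables occurring in a formula (free or bound). -/
def FOForm.vars : FOForm → Finset ℕ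
  | .top | .bot | .empt => ∅
  | .eq x y | .lt x y | .le x y | .suc x y => {x, y}
  | .lab x _ | .fmin x | .fmax x => {x}
  | .not φ => φ.vars
  | .or φ ψ | .and φ ψ => φ.vars ∪ ψ.vars
  | .ex x φ | .all x φ => insert x φ.vars

/-- The formula contains none of the predicates `suc`, `min`, `max`, `empty`. -/
def FOForm.NoSMME : FOForm → Prop
  | .empt | .suc _ _ | .fmin _ | .fmax _ => False
  | .not φ => φ.NoSMME
  | .or φ ψ | .and φ ψ => φ.NoSMME ∧ ψ.NoSMME
  | .ex _ φ | .all _ φ => φ.NoSMME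
  | _ => True

/-- The formula contains the predicate `≤` or `<`. -/
def FOForm.HasOrder : FOForm → Prop
  | .lt _ _ | .le _ _ => True
  | .not φ => φ.HasOrder
  | .or φ ψ | .and φ ψ => φ.HasOrder ∨ ψ.HasOrder
  | .ex _ φ | .all _ φ => φ.HasOrder
  | _ => False

/-- The formula contains one of the predicates `suc`, `min`, `max`, `empty`. -/
def FOForm.HasSMME : FOForm → Prop
  | .empt | .suc _ _ | .fmin _ | .fmax _ => True
  | .not φ => φ.HasSMME
  | .or φ ψ | .and φ ψ => φ.HasSMME ∨ ψ.HasSMME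
  | .ex _ φ | .all _ φ => φ.HasSMME
  | _ => False

def FOForm.IsAtomic : FOForm → Prop
  | .top | .bot | .empt | .eq _ _ | .lab _ _ | .lt _ _ | .le _ _
  | .suc _ _ | .fmin _ | .fmax _ => True
  | _ => False

/-- A literal is an atomic formula or a negated atomic formula. -/
def FOForm.IsLiteral (φ : FOForm) : Prop :=
  φ.IsAtomic ∨ ∃ ψ : FOForm, ψ.IsAtomic ∧ φ = .not ψ

/-- A sentence is a formula without free variables. -/
def FOForm.IsSentence (φ : FOForm) : Prop := φ.FV = ∅

/-- Contexts: formulas with exactly one occurrence of a placeholder `∘`. -/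
inductive FOCtx : Type where
  | hole
  | notC (μ : FOCtx)
  | orL (μ : FOCtx) (ψ : FOForm)
  | orR (φ : FOForm) (μ : FOCtx)
  | andL (μ : FOCtx) (ψ : FOForm)
  | andR (φ : FOForm) (μ : FOCtx)
  | exC (x : ℕ) (μ : FOCtx)
  | allC (x : ℕ) (μ : FOCtx)

/-- Substituting a formula for the placeholder of a context. -/
def FOCtx.subst : FOCtx → FOForm → FOForm
  | .hole, φ => φ
  | .notC μ, φ => .not (μ.subst φ)
  | .orL μ ψ, φ => .or (μ.subst φ) ψ
  | .orR χ μ, φ => .or χ (μ.subst φ)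
  | .andL μ ψ, φ => .and (μ.subst φ) ψ
  | .andR χ μ, φ => .and χ (μ.subst φ)
  | .exC x μ, φ => .ex x (μ.subst φ)
  | .allC x μ, φ => .all x (μ.subst φ)

/-- A fragment: a nonempty set of formulas satisfying the syntactic closure properties. -/
structure IsFragment (F : Set FOForm) : Prop where
  nonempty : F.Nonempty
  top_mem : ∀ (μ : FOCtx) (φ : FOForm), μ.subst φ ∈ F → μ.subst .top ∈ F
  bot_mem : ∀ (μ : FOCtx) (φ : FOForm), μ.subst φ ∈ F → μ.subst .bot ∈ F
  lab_mem : ∀ (μ : FOCtx) (φ : FOForm) (x a : ℕ), μ.subst φ ∈ F → μ.subst (.lab x a) ∈ F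
  or_mem : ∀ (μ : FOCtx) (φ ψ : FOForm),
    μ.subst (.or φ ψ) ∈ F ↔ μ.subst φ ∈ F ∧ μ.subst ψ ∈ F
  and_mem : ∀ (μ : FOCtx) (φ ψ : FOForm),
    μ.subst (.and φ ψ) ∈ F ↔ μ.subst φ ∈ F ∧ μ.subst ψ ∈ F
  negneg : ∀ (μ : FOCtx) (φ : FOForm), μ.subst (.not (.not φ)) ∈ F → μ.subst φ ∈ F
  ex_drop : ∀ (μ : FOCtx) (φ : FOForm) (x : ℕ),
    μ.subst (.ex x φ) ∈ F → x ∉ φ.FV → μ.subst φ ∈ F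
  all_drop : ∀ (μ : FOCtx) (φ : FOForm) (x : ℕ),
    μ.subst (.all x φ) ∈ F → x ∉ φ.FV → μ.subst φ ∈ F

/-- A fragment is order-stable if `μ(x<y) ∈ F ↔ μ(x≤y) ∈ F`. -/
def OrderStable (F : Set FOForm) : Prop :=
  ∀ (μ : FOCtx) (x y : ℕ), μ.subst (.lt x y) ∈ F ↔ μ.subst (.le x y) ∈ F

/-- A fragment is suc-stable if it satisfies the two closure conditions for `suc`, `min`, `max`, `empty`. -/
def SucStable (F : Set FOForm) : Prop :=
  (∀ (μ : FOCtx) (x y : ℕ), μ.subst (.suc x y) ∈ F →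
      μ.subst (.eq x y) ∈ F ∧ μ.subst (.fmax x) ∈ F ∧ μ.subst (.fmin y) ∈ F) ∧
  (∀ (μ : FOCtx) (x : ℕ), (μ.subst (.fmin x) ∈ F ∨ μ.subst (.fmax x) ∈ F) →
      μ.subst .empt ∈ F)

/-- The fragment has quantifier depth bounded by `n`. -/
def QDBoundedBy (F : Set FOForm) (n : ℕ) : Prop := ∀ φ ∈ F, φ.qd ≤ n

/-- Quantifiers, including the negated quantifiers. -/
inductive Quant : Type | qex | qall | qnex | qnall

def Quant.apply : Quant → ℕ → FOForm → FOForm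
  | .qex, x, φ => .ex x φ
  | .qall, x, φ => .all x φ
  | .qnex, x, φ => .not (.ex x φ)
  | .qnall, x, φ => .not (.all x φ)

/-- The reduct `Qx⁻¹F` of a set of formulas. -/
def reduct (Q : Quant) (x : ℕ) (F : Set FOForm) : Set FOForm := {φ | Q.apply x φ ∈ F}
/-! ### Generalized words -/

/-- A (countable) generalized word over the alphabet `ℕ`: a countable linear order
labeled by letters. Words are compared up to label-preserving order isomorphism
(`GWord.Iso`). -/
structure GWord : Type 1 where
  carrier : Type
  ord : LinearOrder carrier
  cnt : Countable carrier
  label : carrier → ℕ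

attribute [instance] GWord.ord GWord.cnt

/-- Label-preserving order isomorphism of generalized words. -/
def GWord.Iso (u v : GWord) : Prop :=
  ∃ f : u.carrier ≃o v.carrier, ∀ p : u.carrier, v.label (f p) = u.label p

/-- Satisfaction of a formula in a word under a (partial) valuation of the variables. -/
def GWord.Sat (u : GWord) : (ℕ → Option u.carrier) → FOForm → Prop
  | _, .top => True
  | _, .bot => False
  | _, .empt => IsEmpty u.carrier
  | α, .eq x y => ∃ p q : u.carrier, α x = some p ∧ α y = some q ∧ p = q
  | α, .lab x a => ∃ p : u.carrier, α x = some p ∧ u.label p = a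
  | α, .lt x y => ∃ p q : u.carrier, α x = some p ∧ α y = some q ∧ p < q
  | α, .le x y => ∃ p q : u.carrier, α x = some p ∧ α y = some q ∧ p ≤ q
  | α, .suc x y => ∃ p q : u.carrier, α x = some p ∧ α y = some q ∧ p < q ∧
      ∀ r : u.carrier, ¬ (p < r ∧ r < q)
  | α, .fmin x => ∃ p : u.carrier, α x = some p ∧ ∀ q : u.carrier, p ≤ q
  | α, .fmax x => ∃ p : u.carrier, α x = some p ∧ ∀ q : u.carrier, q ≤ p
  | α, .not φ => ¬ u.Sat α φ
  | α, .or φ ψ => u.Sat α φ ∨ u.Sat α ψ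
  | α, .and φ ψ => u.Sat α φ ∧ u.Sat α ψ
  | α, .ex x φ => ∃ p : u.carrier, u.Sat (fun y => if y = x then some p else α y) φ
  | α, .all x φ => ∀ p : u.carrier, u.Sat (fun y => if y = x then some p else α y) φ

/-- The empty valuation. -/
def emptyVal (u : GWord) : ℕ → Option u.carrier := fun _ => none

/-- A word satisfies a sentence. -/
def SatS (u : GWord) (φ : FOForm) : Prop := u.Sat (emptyVal u) φ

/-- Updating a valuation at a variable. -/
def updVal {u : GWord} (α : ℕ → Option u.carrier) (x : ℕ) (p : u.carrier) :
    ℕ → Option u.carrier :=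
  fun y => if y = x then some p else α y

/-- The domain of the valuation `α` is exactly the finite set `V`. -/
def ValDom {u : GWord} (α : ℕ → Option u.carrier) (V : Finset ℕ) : Prop :=
  ∀ x : ℕ, (α x).isSome ↔ x ∈ V

/-- A finite word, regarded as a generalized word. -/
def listToGWord (w : List ℕ) : GWord :=
  ⟨Fin w.length, inferInstance, inferInstance, w.get⟩

/-- Concatenation of generalized words. -/
def GWord.concat (u v : GWord) : GWord :=
  ⟨u.carrier ⊕ₗ v.carrier, inferInstance, inferInstance,
    fun p => Sum.elim u.label v.label (ofLex p)⟩

/-- The `τ`-power of a word, where `τ` is the order type of the countable linear order `T`: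
positions are pairs `(t, p)` ordered with the `T`-component dominant. -/
def GWord.pow (u : GWord) (T : Type) [LinearOrder T] [Countable T] : GWord :=
  ⟨T ×ₗ u.carrier, inferInstance, inferInstance, fun p => u.label (ofLex p).2⟩

/-- An index type of order type `ρ = ω + ζ·η + ω*`: a copy of `ℕ`, followed by `ℤ × ℚ`
ordered lexicographically with the `ℚ`-component dominant, followed by the negative
integers (the order dual of `ℕ`). -/
abbrev Rho : Type := (ℕ ⊕ₗ (ℚ ×ₗ ℤ)) ⊕ₗ ℕᵒᵈ

/-- ρ-rational words: built from finite words by concatenation and ρ-power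
(closed under isomorphism, since words are identified up to isomorphism). -/
inductive RhoRational : GWord → Prop where
  | fin (w : List ℕ) : RhoRational (listToGWord w)
  | concat {u v : GWord} : RhoRational u → RhoRational v → RhoRational (u.concat v)
  | rpow {u : GWord} : RhoRational u → RhoRational (u.pow Rho)
  | iso {u v : GWord} : RhoRational u → GWord.Iso u v → RhoRational v
/-! ### The `F`-game -/

/-- A configuration of the `F`-game: a set of formulas (an iterated reduct of the
original fragment) together with two valuations on two words. -/
structure Config : Type 1 where
  frag : Set FOForm
  w1 : GWord
  w2 : GWord
  val1 : ℕ → Option w1.carrier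
  val2 : ℕ → Option w2.carrier

/-- Spoiler's winning condition: the configuration contains a literal with free variables
inside the valuation domain, satisfied in the first valuation but not in the second. -/
def SpoilerWinsNow (C : Config) : Prop :=
  ∃ φ ∈ C.frag, φ.IsLiteral ∧ (∀ y ∈ φ.FV, (C.val1 y).isSome) ∧
    C.w1.Sat C.val1 φ ∧ ¬ C.w2.Sat C.val2 φ

/-- A set of configurations is a (Duplicator-)safe invariant: no configuration in it is
immediately winning for Spoiler, and for every move of Spoiler (a quantifier `Q`, a
variable `x` with nonempty reduct, and a quest `q` in the appropriate word) Duplicator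
has a reply `r` leading back into the set (the valuations are swapped for negated
quantifiers). -/
def SafeInv (Good : Set Config) : Prop :=
  ∀ D ∈ Good,
    (¬ SpoilerWinsNow D) ∧
    (∀ x : ℕ, (reduct .qex x D.frag).Nonempty →
      ∀ q : D.w1.carrier, ∃ r : D.w2.carrier,
        (⟨reduct .qex x D.frag, D.w1, D.w2, updVal D.val1 x q, updVal D.val2 x r⟩ : Config) ∈ Good) ∧
    (∀ x : ℕ, (reduct .qall x D.frag).Nonempty →
      ∀ q : D.w2.carrier, ∃ r : D.w1.carrier,
        (⟨reduct .qall x D.frag, D.w1, D.w2, updVal D.val1 x r, updVal D.val2 x q⟩ : Config) ∈ Good) ∧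
    (∀ x : ℕ, (reduct .qnex x D.frag).Nonempty →
      ∀ q : D.w2.carrier, ∃ r : D.w1.carrier,
        (⟨reduct .qnex x D.frag, D.w2, D.w1, updVal D.val2 x q, updVal D.val1 x r⟩ : Config) ∈ Good) ∧
    (∀ x : ℕ, (reduct .qnall x D.frag).Nonempty →
      ∀ q : D.w1.carrier, ∃ r : D.w2.carrier,
        (⟨reduct .qnall x D.frag, D.w2, D.w1, updVal D.val2 x r, updVal D.val1 x q⟩ : Config) ∈ Good)

/-- Duplicator has a winning strategy from a configuration of this (possibly infinite)
safety game iff some safe invariant contains the configuration. -/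
def DuplicatorWins (C : Config) : Prop :=
  ∃ Good : Set Config, C ∈ Good ∧ SafeInv Good

/-- Duplicator has a winning strategy in the `F`-game on `(u, v)` (from the initial
configuration with empty valuations). -/
def DuplicatorWinsGame (F : Set FOForm) (u v : GWord) : Prop :=
  DuplicatorWins ⟨F, u, v, fun _ => none, fun _ => none⟩

/-- Spoiler has a winning strategy: either the current configuration is already winning
for Spoiler, or Spoiler has a move such that every reply of Duplicator (in particular,
no possible reply) leads to a configuration where Spoiler wins. -/
inductive SpoilerWins : Config → Prop where
  | now {C : Config} : SpoilerWinsNow C → SpoilerWins C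
  | mex {C : Config} (x : ℕ) (h : (reduct .qex x C.frag).Nonempty) (q : C.w1.carrier)
      (h2 : ∀ r : C.w2.carrier, SpoilerWins
        ⟨reduct .qex x C.frag, C.w1, C.w2, updVal C.val1 x q, updVal C.val2 x r⟩) :
      SpoilerWins C

/-! ### π-terms and their interpretations -/

/-- π-terms over the alphabet `ℕ` (elements of the free π-algebra). -/
inductive PiTerm : Type where
  | letter (a : ℕ)
  | mul (s t : PiTerm)
  | pi (s : PiTerm)

/-- The interpretation `⟦·⟧_ρ` of π-terms as generalized words: letters become
single-position words, products concatenations, and the π-power the ρ-power. -/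
def PiTerm.evalRho : PiTerm → GWord
  | .letter a => listToGWord [a]
  | .mul s t => s.evalRho.concat t.evalRho
  | .pi s => s.evalRho.pow Rho

/-- The interpretation `⟦·⟧_m` of π-terms as finite words: the π-power becomes
the `m`-fold concatenation power. -/
def PiTerm.evalFin (m : ℕ) : PiTerm → GWord
  | .letter a => listToGWord [a]
  | .mul s t => (s.evalFin m).concat (t.evalFin m)
  | .pi s => (s.evalFin m).pow (Fin m)

/-- `mpow u k = u^(k+1)`: positive powers in any semigroup (or magma). -/
def mpow {M : Type} [Mul M] (u : M) : ℕ → M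
  | 0 => u
  | k+1 => mpow u k * u

/-- `k+1` is an idempotency exponent of `M`: `u^(k+1)` is idempotent for every `u`. -/
def IsIdemExpnt (M : Type) [Mul M] (k : ℕ) : Prop :=
  ∀ u : M, mpow u k * mpow u k = mpow u k

/-- Evaluation of a π-term in `M` under a letter assignment `h`, interpreting the
π-power as the `(k+1)`-st power. -/
def PiTerm.evalMul {M : Type} [Mul M] (h : ℕ → M) (k : ℕ) : PiTerm → M
  | .letter a => h a
  | .mul s t => (s.evalMul h k) * (t.evalMul h k)
  | .pi s => mpow (s.evalMul h k) k

/-- The identity `s = t` of π-terms holds in `M`: for every assignment of the letters and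
every idempotency exponent (i.e. interpreting `(·)^π` as the idempotent power), the two
terms evaluate equally. -/
def PiIdentityHolds (M : Type) [Mul M] (s t : PiTerm) : Prop :=
  ∀ (h : ℕ → M) (k : ℕ), IsIdemExpnt M k → s.evalMul h k = t.evalMul h k

/-! ### Languages, definability and syntactic monoids/semigroups -/

/-- All letters of the finite word `w` belong to the alphabet `A`. -/
def InAlph (A : Finset ℕ) (w : FreeMonoid ℕ) : Prop :=
  ∀ a ∈ FreeMonoid.toList w, a ∈ A

/-- A finite word, regarded as a generalized word. -/
def wordToGWord (w : FreeMonoid ℕ) : GWord := listToGWord (FreeMonoid.toList w)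

/-- The submonoid `A* ⊆ Λ*` of words over the finite alphabet `A`. -/
def wordsOver (A : Finset ℕ) : Submonoid (FreeMonoid ℕ) where
  carrier := {w | InAlph A w}
  mul_mem' := by
    intro u v hu hv a ha
    rw [FreeMonoid.toList_mul] at ha
    rcases List.mem_append.mp ha with h | h
    exacts [hu a h, hv a h]
  one_mem' := by
    intro a ha
    simp [FreeMonoid.toList_one] at ha

/-- The single-letter word `a ∈ A*`. -/
def letterWord (A : Finset ℕ) (a : ℕ) (ha : a ∈ A) : ↥(wordsOver A) :=
  ⟨FreeMonoid.of a, by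
    intro b hb
    rw [FreeMonoid.toList_of] at hb
    rcases List.mem_singleton.mp hb with rfl
    exact ha⟩

/-- The language over `A` defined by the sentence `φ`. -/
def LangOf (A : Finset ℕ) (φ : FOForm) : Set (FreeMonoid ℕ) :=
  {w | InAlph A w ∧ SatS (wordToGWord w) φ}

/-- `L ⊆ A*` is definable in `F` over the alphabet `A`. -/
def DefinableIn (F : Set FOForm) (A : Finset ℕ) (L : Set (FreeMonoid ℕ)) : Prop :=
  ∃ φ ∈ F, φ.IsSentence ∧ L = LangOf A φ

/-- The syntactic congruence of `L` on `A*`: `u ≡_L v` iff `xuy ∈ L ⇔ xvy ∈ L` for all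
contexts `x, y ∈ A*`. -/
def synCon (A : Finset ℕ) (L : Set (FreeMonoid ℕ)) : Con ↥(wordsOver A) where
  r u v := ∀ x y : FreeMonoid ℕ, InAlph A x → InAlph A y →
    ((x * ↑u * y ∈ L) ↔ (x * ↑v * y ∈ L))
  iseqv := ⟨fun _ _ _ _ _ => Iff.rfl,
    fun h x y hx hy => (h x y hx hy).symm,
    fun h1 h2 x y hx hy => (h1 x y hx hy).trans (h2 x y hx hy)⟩
  mul' := by
    intro w x y z h1 h2 a b ha hb
    have hyb : InAlph A ((y : FreeMonoid ℕ) * b) := by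
      intro c hc
      rw [FreeMonoid.toList_mul] at hc
      rcases List.mem_append.mp hc with h | h
      exacts [y.2 c h, hb c h]
    have hax : InAlph A (a * (x : FreeMonoid ℕ)) := by
      intro c hc
      rw [FreeMonoid.toList_mul] at hc
      rcases List.mem_append.mp hc with h | h
      exacts [ha c h, x.2 c h]
    have e1 : a * ↑(w * y) * b = a * (w : FreeMonoid ℕ) * (↑y * b) := by
      push_cast; simp [mul_assoc]
    have e2 : a * (x : FreeMonoid ℕ) * (↑y * b) = (a * ↑x) * ↑y * b := by
      simp [mul_assoc]
    have e3 : (a * (x : FreeMonoid ℕ)) * ↑z * b = a * ↑(x * z) * b := by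
      push_cast; simp [mul_assoc]
    rw [e1, h1 a (↑y * b) ha hyb, e2, h2 (a * ↑x) b hax hb, e3]

/-- The syntactic monoid `M_L = A*/≡_L`. -/
def SynMonoid (A : Finset ℕ) (L : Set (FreeMonoid ℕ)) : Type := (synCon A L).Quotient

instance (A : Finset ℕ) (L : Set (FreeMonoid ℕ)) : Monoid (SynMonoid A L) :=
  inferInstanceAs (Monoid (synCon A L).Quotient)

/-- The subsemigroup `A⁺ ⊆ Λ*` of nonempty words over the finite alphabet `A`. -/
def plusWordsOver (A : Finset ℕ) : Subsemigroup (FreeMonoid ℕ) where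
  carrier := {w | w ≠ 1 ∧ InAlph A w}
  mul_mem' := by
    intro u v hu hv
    refine ⟨?_, ?_⟩
    · intro h
      apply hu.1
      have : FreeMonoid.toList (u * v) = FreeMonoid.toList (1 : FreeMonoid ℕ) := by rw [h]
      rw [FreeMonoid.toList_mul, FreeMonoid.toList_one] at this
      exact (List.append_eq_nil_iff.mp this).1
    · intro a ha
      rw [FreeMonoid.toList_mul] at ha
      rcases List.mem_append.mp ha with h | h
      exacts [hu.2 a h, hv.2 a h]

/-- The syntactic congruence of `L ⊆ A⁺` on `A⁺` (contexts range over `A*`). -/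
def synConS (A : Finset ℕ) (L : Set (FreeMonoid ℕ)) : Con ↥(plusWordsOver A) where
  r u v := ∀ x y : FreeMonoid ℕ, InAlph A x → InAlph A y →
    ((x * ↑u * y ∈ L) ↔ (x * ↑v * y ∈ L))
  iseqv := ⟨fun _ _ _ _ _ => Iff.rfl,
    fun h x y hx hy => (h x y hx hy).symm,
    fun h1 h2 x y hx hy => (h1 x y hx hy).trans (h2 x y hx hy)⟩
  mul' := by
    intro w x y z h1 h2 a b ha hb
    have hyb : InAlph A ((y : FreeMonoid ℕ) * b) := by
      intro c hc
      rw [FreeMonoid.toList_mul] at hc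
      rcases List.mem_append.mp hc with h | h
      exacts [y.2.2 c h, hb c h]
    have hax : InAlph A (a * (x : FreeMonoid ℕ)) := by
      intro c hc
      rw [FreeMonoid.toList_mul] at hc
      rcases List.mem_append.mp hc with h | h
      exacts [ha c h, x.2.2 c h]
    have e1 : a * ↑(w * y) * b = a * (w : FreeMonoid ℕ) * (↑y * b) := by
      push_cast; simp [mul_assoc]
    have e2 : a * (x : FreeMonoid ℕ) * (↑y * b) = (a * ↑x) * ↑y * b := by
      simp [mul_assoc]
    have e3 : (a * (x : FreeMonoid ℕ)) * ↑z * b = a * ↑(x * z) * b := by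
      push_cast; simp [mul_assoc]
    rw [e1, h1 a (↑y * b) ha hyb, e2, h2 (a * ↑x) b hax hb, e3]

/-- The syntactic semigroup of `L ⊆ A⁺`. -/
def SynSemigroup (A : Finset ℕ) (L : Set (FreeMonoid ℕ)) : Type := (synConS A L).Quotient

instance (A : Finset ℕ) (L : Set (FreeMonoid ℕ)) : Semigroup (SynSemigroup A L) :=
  inferInstanceAs (Semigroup (synConS A L).Quotient)

/-- The language of nonempty words over `A` defined by the sentence `φ`. -/
def LangOfPlus (A : Finset ℕ) (φ : FOForm) : Set (FreeMonoid ℕ) :=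
  {w | w ≠ 1 ∧ InAlph A w ∧ SatS (wordToGWord w) φ}

/-- `L ⊆ A⁺` is definable in `F` over the alphabet `A`, over nonempty words. -/
def DefinablePlusIn (F : Set FOForm) (A : Finset ℕ) (L : Set (FreeMonoid ℕ)) : Prop :=
  ∃ φ ∈ F, φ.IsSentence ∧ L = LangOfPlus A φ

/-! ### Concatenation of finite families and unions of valuations -/

/-- Concatenation of a finite family of words `u 0, u 1, …, u (k-1)` (in this order). -/
def GWord.concatFam {k : ℕ} (u : Fin k → GWord) : GWord :=
  ⟨Σₗ i : Fin k, (u i).carrier, inferInstance,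
    inferInstanceAs (Countable (Lex (Σ i : Fin k, (u i).carrier))),
    fun p => (u (ofLex p).1).label (ofLex p).2⟩

/-- The union of a family of valuations with (mutually disjoint) domains, as a valuation
on the concatenation. -/
def combineVal {k : ℕ} (u : Fin k → GWord) (α : ∀ i : Fin k, ℕ → Option (u i).carrier)
    (x : ℕ) : Option (GWord.concatFam u).carrier :=
  (List.finRange k).findSome? fun i => ((α i x).map fun p => toLex ⟨i, p⟩)

/-!
Duplicator plays blockwise. A move in block `i` is answered by the strategy for block `i`; every
other block makes a dummy move with the same quantifier, so that all blocks stay in the fragment of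
the whole game. A block that cannot make a dummy move because its quest side is empty admits no
moves at all in the reduced fragment either, so it stays won with its valuations forgotten.
A literal of the concatenation is decided blockwise: atoms about one block are read off that block,
and the atoms that see across block borders (`suc`, `min`, `max`, `empty`) reduce, by suc-stability,
to `max`, `min` and `empty` atoms of single blocks. Negated quantifiers and negated atoms are the
positive ones on the negated configuration, which swaps the two sides.
-/

def FOCtx.comp : FOCtx → FOCtx → FOCtx
  | .hole, ν => ν
  | .notC μ, ν => .notC (μ.comp ν)
  | .orL μ ψ, ν => .orL (μ.comp ν) ψ
  | .orR φ μ, ν => .orR φ (μ.comp ν)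
  | .andL μ ψ, ν => .andL (μ.comp ν) ψ
  | .andR φ μ, ν => .andR φ (μ.comp ν)
  | .exC x μ, ν => .exC x (μ.comp ν)
  | .allC x μ, ν => .allC x (μ.comp ν)

theorem FOCtx.comp_subst (μ ν : FOCtx) (φ : FOForm) :
    (μ.comp ν).subst φ = μ.subst (ν.subst φ) := by
  induction μ <;> simp [FOCtx.comp, FOCtx.subst, *]

def FOCtx.preimage (ν : FOCtx) (G : Set FOForm) : Set FOForm := {φ | ν.subst φ ∈ G}

def Quant.ctx : Quant → ℕ → FOCtx
  | .qex, x => .exC x .hole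
  | .qall, x => .allC x .hole
  | .qnex, x => .notC (.exC x .hole)
  | .qnall, x => .notC (.allC x .hole)

theorem Quant.ctx_subst (Q : Quant) (x : ℕ) (φ : FOForm) :
    (Q.ctx x).subst φ = Q.apply x φ := by
  cases Q <;> rfl

theorem reduct_eq_preimage (Q : Quant) (x : ℕ) (G : Set FOForm) :
    reduct Q x G = (Q.ctx x).preimage G := by
  ext φ
  simp [reduct, FOCtx.preimage, Quant.ctx_subst]

theorem reduct_mono {Q : Quant} {x : ℕ} {G H : Set FOForm} (h : G ⊆ H) :
    reduct Q x G ⊆ reduct Q x H := fun _ hφ => h hφ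

theorem FOForm.FV_apply_top (Q : Quant) (x : ℕ) : (Q.apply x .top).FV = ∅ := by
  cases Q <;> simp [Quant.apply, FOForm.FV]

/-- Closure conditions of a fragment that, unlike nonemptiness, pass to reducts. -/
structure ContextClosed (G : Set FOForm) : Prop where
  top_mem : ∀ (μ : FOCtx) (φ : FOForm), μ.subst φ ∈ G → μ.subst .top ∈ G
  negneg : ∀ (μ : FOCtx) (φ : FOForm), μ.subst (.not (.not φ)) ∈ G → μ.subst φ ∈ G
  ex_drop : ∀ (μ : FOCtx) (φ : FOForm) (x : ℕ),
    μ.subst (.ex x φ) ∈ G → x ∉ φ.FV → μ.subst φ ∈ G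
  all_drop : ∀ (μ : FOCtx) (φ : FOForm) (x : ℕ),
    μ.subst (.all x φ) ∈ G → x ∉ φ.FV → μ.subst φ ∈ G

theorem IsFragment.contextClosed {F : Set FOForm} (hF : IsFragment F) : ContextClosed F :=
  ⟨hF.top_mem, hF.negneg, hF.ex_drop, hF.all_drop⟩

namespace ContextClosed

variable {G : Set FOForm}

theorem preimage (hG : ContextClosed G) (ν : FOCtx) : ContextClosed (ν.preimage G) := by
  constructor <;> simp only [FOCtx.preimage, Set.mem_ofPred_eq, ← FOCtx.comp_subst]
  exacts [fun μ => hG.top_mem (ν.comp μ), fun μ => hG.negneg (ν.comp μ),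
    fun μ => hG.ex_drop (ν.comp μ), fun μ => hG.all_drop (ν.comp μ)]

theorem reduct (hG : ContextClosed G) (Q : Quant) (x : ℕ) : ContextClosed (reduct Q x G) := by
  rw [reduct_eq_preimage]
  exact hG.preimage _

theorem top_mem_of_mem (hG : ContextClosed G) {Q : Quant} {x : ℕ} {φ : FOForm}
    (h : Q.apply x φ ∈ G) : Q.apply x .top ∈ G := by
  rw [← Quant.ctx_subst] at h ⊢
  exact hG.top_mem _ _ h

theorem mem_of_mem_reduct (hG : ContextClosed G) {Q : Quant} (hQ : Q = .qex ∨ Q = .qall)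
    {x : ℕ} {φ : FOForm} (hφ : φ ∈ EFGames.reduct Q x G) (hcl : φ.FV = ∅) : φ ∈ G := by
  rcases hQ with rfl | rfl
  exacts [hG.ex_drop .hole φ x hφ (by simp [hcl]), hG.all_drop .hole φ x hφ (by simp [hcl])]

end ContextClosed

theorem SucStable.preimage {G : Set FOForm} (hG : SucStable G) (ν : FOCtx) :
    SucStable (ν.preimage G) := by
  constructor <;> simp only [FOCtx.preimage, Set.mem_ofPred_eq, ← FOCtx.comp_subst]
  exacts [fun μ => hG.1 (ν.comp μ), fun μ => hG.2 (ν.comp μ)]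

theorem SucStable.reduct {G : Set FOForm} (hG : SucStable G) (Q : Quant) (x : ℕ) :
    SucStable (reduct Q x G) := by
  rw [reduct_eq_preimage]
  exact hG.preimage _

namespace GWord

theorem sat_congr {u : GWord} {φ : FOForm} : ∀ {α α' : ℕ → Option u.carrier},
    (∀ y ∈ φ.FV, α y = α' y) → (u.Sat α φ ↔ u.Sat α' φ) := by
  induction φ with
  | not φ ih => exact fun h => not_congr (ih h)
  | or φ ψ ihφ ihψ =>
    intro α α' h
    simp only [FOForm.FV, Finset.mem_union] at h
    exact or_congr (ihφ fun y hy => h y (.inl hy)) (ihψ fun y hy => h y (.inr hy))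
  | and φ ψ ihφ ihψ =>
    intro α α' h
    simp only [FOForm.FV, Finset.mem_union] at h
    exact and_congr (ihφ fun y hy => h y (.inl hy)) (ihψ fun y hy => h y (.inr hy))
  | ex x φ ih =>
    intro α α' h
    refine exists_congr fun p => ih fun y hy => ?_
    by_cases hyx : y = x
    · simp [hyx]
    · simp [hyx, h y (Finset.mem_erase.2 ⟨hyx, hy⟩)]
  | all x φ ih =>
    intro α α' h
    refine forall_congr' fun p => ih fun y hy => ?_
    by_cases hyx : y = x
    · simp [hyx]
    · simp [hyx, h y (Finset.mem_erase.2 ⟨hyx, hy⟩)]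
  | _ => intro α α' h; simp_all [GWord.Sat, FOForm.FV]

theorem isSome_of_sat {u : GWord} {α : ℕ → Option u.carrier} {φ : FOForm} (hφ : φ.IsAtomic)
    (h : u.Sat α φ) : ∀ y ∈ φ.FV, (α y).isSome := by
  cases φ <;> simp_all [GWord.Sat, FOForm.FV, FOForm.IsAtomic] <;> aesop

end GWord

/-- The moves `¬∃`, `¬∀` of `C` are the moves `∃`, `∀` of `C.neg`. -/
def Config.neg (C : Config) : Config :=
  ⟨(FOCtx.notC .hole).preimage C.frag, C.w2, C.w1, C.val2, C.val1⟩

def Config.ExMovesInto (D : Config) (T : Set Config) : Prop :=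
  ∀ x : ℕ, (reduct .qex x D.frag).Nonempty → ∀ q : D.w1.carrier, ∃ r : D.w2.carrier,
    (⟨reduct .qex x D.frag, D.w1, D.w2, updVal D.val1 x q, updVal D.val2 x r⟩ : Config) ∈ T

def Config.AllMovesInto (D : Config) (T : Set Config) : Prop :=
  ∀ x : ℕ, (reduct .qall x D.frag).Nonempty → ∀ q : D.w2.carrier, ∃ r : D.w1.carrier,
    (⟨reduct .qall x D.frag, D.w1, D.w2, updVal D.val1 x r, updVal D.val2 x q⟩ : Config) ∈ T

def Config.MovesInto (D : Config) (T : Set Config) : Prop :=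
  D.ExMovesInto T ∧ D.AllMovesInto T ∧ D.neg.ExMovesInto T ∧ D.neg.AllMovesInto T

theorem Config.MovesInto.mono {D : Config} {T T' : Set Config} (h : D.MovesInto T)
    (hT : T ⊆ T') : D.MovesInto T' :=
  ⟨fun x hx q => (h.1 x hx q).imp fun _ hr => hT hr,
    fun x hx q => (h.2.1 x hx q).imp fun _ hr => hT hr,
    fun x hx q => (h.2.2.1 x hx q).imp fun _ hr => hT hr,
    fun x hx q => (h.2.2.2 x hx q).imp fun _ hr => hT hr⟩

def AtomWinsNow (C : Config) : Prop :=
  ∃ φ ∈ C.frag, φ.IsAtomic ∧ C.w1.Sat C.val1 φ ∧ ¬ C.w2.Sat C.val2 φ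

theorem SpoilerWinsNow.atomWinsNow_or {C : Config} (h : SpoilerWinsNow C) :
    AtomWinsNow C ∨ AtomWinsNow C.neg := by
  obtain ⟨φ, hφ, hat | ⟨ψ, hψ, rfl⟩, -, h1, h2⟩ := h
  · exact .inl ⟨φ, hφ, hat, h1, h2⟩
  · exact .inr ⟨ψ, hφ, hψ, not_not.1 h2, h1⟩

theorem AtomWinsNow.spoilerWinsNow {C : Config} (h : AtomWinsNow C) : SpoilerWinsNow C :=
  let ⟨φ, hφ, hat, h1, h2⟩ := h
  ⟨φ, hφ, .inl hat, GWord.isSome_of_sat hat h1, h1, h2⟩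

theorem AtomWinsNow.spoilerWinsNow_of_neg {C : Config} (h : AtomWinsNow C.neg)
    (hdom : ∀ y, (C.val2 y).isSome → (C.val1 y).isSome) : SpoilerWinsNow C :=
  let ⟨φ, hφ, hat, h1, h2⟩ := h
  ⟨.not φ, hφ, .inr ⟨φ, hat, rfl⟩, fun y hy => hdom y (GWord.isSome_of_sat hat h1 y hy),
    h2, not_not.2 h1⟩

theorem safeInv_of_neg_mem {S : Set Config}
    (h : ∀ D ∈ S, D.neg ∈ S ∧ ¬ AtomWinsNow D ∧ D.ExMovesInto S ∧ D.AllMovesInto S) :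
    SafeInv S := fun D hD =>
  let ⟨hneg, hat, hex, hall⟩ := h D hD
  let ⟨_, hat', hex', hall'⟩ := h _ hneg
  ⟨fun hw => hw.atomWinsNow_or.elim hat hat', hex, hall, hex', hall'⟩

namespace DuplicatorWins

theorem not_spoilerWinsNow {C : Config} (h : DuplicatorWins C) : ¬ SpoilerWinsNow C :=
  let ⟨_, hC, hsafe⟩ := h
  (hsafe C hC).1

theorem movesInto {C : Config} (h : DuplicatorWins C) : C.MovesInto {D | DuplicatorWins D} :=
  let ⟨Good, hC, hsafe⟩ := h
  Config.MovesInto.mono (hsafe C hC).2 fun _ hD => ⟨Good, hD, hsafe⟩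

theorem of_movesInto {S : Set Config}
    (hS : ∀ D ∈ S, ¬ SpoilerWinsNow D ∧ D.MovesInto (S ∪ {D | DuplicatorWins D}))
    {C : Config} (hC : C ∈ S) : DuplicatorWins C :=
  ⟨S ∪ {D | DuplicatorWins D}, .inl hC, fun D hD => hD.elim (hS D) fun hw =>
    ⟨hw.not_spoilerWinsNow, hw.movesInto.mono Set.subset_union_right⟩⟩

end DuplicatorWins

def IsRestriction {X Y : Type} (δ : ℕ → Option X) (δ' : ℕ → Option Y)
    (γ : ℕ → Option X) (γ' : ℕ → Option Y) : Prop :=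
  ∀ z, (δ z = none ∧ δ' z = none) ∨ (δ z = γ z ∧ δ' z = γ' z)

namespace IsRestriction

variable {X Y : Type} {δ γ : ℕ → Option X} {δ' γ' : ℕ → Option Y}

theorem refl (γ : ℕ → Option X) (γ' : ℕ → Option Y) : IsRestriction γ γ' γ γ' :=
  fun _ => .inr ⟨rfl, rfl⟩

theorem symm (h : IsRestriction δ δ' γ γ') : IsRestriction δ' δ γ' γ :=
  fun z => (h z).imp And.symm And.symm

theorem update (h : IsRestriction δ δ' γ γ') (x : ℕ) (a : X) (b : Y) :
    IsRestriction (fun y => if y = x then some a else δ y)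
      (fun y => if y = x then some b else δ' y)
      (fun y => if y = x then some a else γ y) (fun y => if y = x then some b else γ' y) := by
  intro z
  by_cases hz : z = x
  · simp [hz]
  · simpa [hz] using h z

theorem eq_of_isSome (h : IsRestriction δ δ' γ γ') {z : ℕ} (hz : (δ z).isSome) :
    δ z = γ z ∧ δ' z = γ' z :=
  (h z).resolve_left fun h0 => by simp [h0.1] at hz

end IsRestriction

section Anti

variable {U U' : GWord} {G H : Set FOForm} {γ δ : ℕ → Option U.carrier}
  {γ' δ' : ℕ → Option U'.carrier}

def BelowWinning : Set Config :=
  {D | ∃ (H : Set FOForm) (γ : ℕ → Option D.w1.carrier) (γ' : ℕ → Option D.w2.carrier),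
    D.frag ⊆ H ∧ IsRestriction D.val1 D.val2 γ γ' ∧
      DuplicatorWins ⟨H, D.w1, D.w2, γ, γ'⟩}

theorem Config.ExMovesInto.belowWinning
    (hw : Config.ExMovesInto ⟨H, U, U', γ, γ'⟩ {D | DuplicatorWins D}) (hGH : G ⊆ H)
    (hδ : IsRestriction δ δ' γ γ') :
    Config.ExMovesInto ⟨G, U, U', δ, δ'⟩ BelowWinning :=
  fun x hne q =>
    let ⟨r, hr⟩ := hw x (hne.mono (reduct_mono hGH)) q
    ⟨r, _, _, _, reduct_mono hGH, hδ.update x q r, hr⟩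

theorem Config.AllMovesInto.belowWinning
    (hw : Config.AllMovesInto ⟨H, U, U', γ, γ'⟩ {D | DuplicatorWins D}) (hGH : G ⊆ H)
    (hδ : IsRestriction δ δ' γ γ') :
    Config.AllMovesInto ⟨G, U, U', δ, δ'⟩ BelowWinning :=
  fun x hne q =>
    let ⟨r, hr⟩ := hw x (hne.mono (reduct_mono hGH)) q
    ⟨r, _, _, _, reduct_mono hGH, hδ.update x r q, hr⟩

theorem DuplicatorWins.anti (hw : DuplicatorWins ⟨H, U, U', γ, γ'⟩) (hGH : G ⊆ H)
    (hδ : IsRestriction δ δ' γ γ') : DuplicatorWins ⟨G, U, U', δ, δ'⟩ := by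
  refine DuplicatorWins.of_movesInto (S := BelowWinning) ?_ ⟨H, γ, γ', hGH, hδ, hw⟩
  rintro ⟨G, U, U', δ, δ'⟩ ⟨H, γ, γ', hGH, hδ, hw⟩
  refine ⟨?_, Config.MovesInto.mono ?_ Set.subset_union_left⟩
  · rintro ⟨φ, hφ, hlit, hdom, h1, h2⟩
    have hagree (y) (hy : y ∈ φ.FV) : δ y = γ y ∧ δ' y = γ' y :=
      hδ.eq_of_isSome (hdom y hy)
    refine hw.not_spoilerWinsNow ⟨φ, hGH hφ, hlit, fun y hy => ?_, ?_, ?_⟩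
    · simpa only [(hagree y hy).1] using hdom y hy
    · exact (GWord.sat_congr fun y hy => (hagree y hy).1).1 h1
    · exact fun h => h2 ((GWord.sat_congr fun y hy => (hagree y hy).2).2 h)
  · obtain ⟨hex, hall, hnex, hnall⟩ := hw.movesInto
    exact ⟨hex.belowWinning hGH hδ, hall.belowWinning hGH hδ,
      hnex.belowWinning (fun φ hφ => hGH hφ) hδ.symm,
      hnall.belowWinning (fun φ hφ => hGH hφ) hδ.symm⟩

end Anti

namespace DuplicatorWins

theorem neg {C : Config} (h : DuplicatorWins C)
    (hG : ∀ φ, .not (.not φ) ∈ C.frag → φ ∈ C.frag)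
    (hdom : ∀ y, (C.val2 y).isSome → (C.val1 y).isSome) : DuplicatorWins C.neg := by
  have hnn : DuplicatorWins C.neg.neg := anti (H := C.frag) h (fun φ hφ => hG φ hφ) (.refl _ _)
  refine of_movesInto (S := {C.neg}) ?_ rfl
  rintro _ rfl
  refine ⟨fun hw => hw.atomWinsNow_or.elim (fun ha => h.not_spoilerWinsNow
    (ha.spoilerWinsNow_of_neg hdom)) fun ha => hnn.not_spoilerWinsNow ha.spoilerWinsNow, ?_⟩
  obtain ⟨-, -, hex, hall⟩ := h.movesInto
  exact Config.MovesInto.mono ⟨hex, hall, hnn.movesInto.1, hnn.movesInto.2.1⟩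
    Set.subset_union_right

/-- A configuration with an empty side admits no move at all, so only its closed literals
matter; these survive in any fragment whose closed members lie in `G`. -/
theorem of_isEmpty {G G' : Set FOForm} {U U' : GWord} {γ δ : ℕ → Option U.carrier}
    {γ' δ' : ℕ → Option U'.carrier} (h : DuplicatorWins ⟨G, U, U', γ, γ'⟩)
    (hU : IsEmpty U.carrier ∨ IsEmpty U'.carrier) (hG' : ContextClosed G')
    (hclosed : ∀ φ ∈ G', φ.FV = ∅ → φ ∈ G) (hδ : ∀ y, δ y = none) :
    DuplicatorWins ⟨G', U, U', δ, δ'⟩ := by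
  have hboth : U.carrier → U'.carrier → False := fun p p' => hU.elim (·.false p) (·.false p')
  have hmove (Q : Quant) (y : ℕ) : (reduct Q y G').Nonempty → (reduct Q y G).Nonempty :=
    fun ⟨_, hφ⟩ => ⟨.top, hclosed _ (hG'.top_mem_of_mem hφ) (FOForm.FV_apply_top Q y)⟩
  refine of_movesInto (S := {⟨G', U, U', δ, δ'⟩}) ?_ rfl
  rintro _ rfl
  obtain ⟨hex, hall, hnex, hnall⟩ := h.movesInto
  refine ⟨?_, fun y hy q => ?_, fun y hy q => ?_, fun y hy q => ?_, fun y hy q => ?_⟩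
  · rintro ⟨φ, hφ, hlit, hdom, h1, h2⟩
    have hcl : φ.FV = ∅ :=
      Finset.eq_empty_of_forall_notMem fun y hy => by simpa [hδ] using hdom y hy
    have hsat {X : GWord} {a b : ℕ → Option X.carrier} : X.Sat a φ ↔ X.Sat b φ :=
      GWord.sat_congr (by simp [hcl])
    exact h.not_spoilerWinsNow
      ⟨φ, hclosed φ hφ hcl, hlit, by simp [hcl], hsat.1 h1, hsat.not.1 h2⟩
  · exact (hboth q (hex y (hmove .qex y hy) q).choose).elim
  · exact (hboth (hall y (hmove .qall y hy) q).choose q).elim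
  · exact (hboth (hnex y (hmove .qnex y hy) q).choose q).elim
  · exact (hboth q (hnall y (hmove .qnall y hy) q).choose).elim

end DuplicatorWins

/-- The atoms preserved and reflected by label-preserving order embeddings onto convex subsets:
all but `empty`, `min` and `max`. -/
def FOForm.IsLocalAtom : FOForm → Prop
  | .top | .bot | .eq _ _ | .lab _ _ | .lt _ _ | .le _ _ | .suc _ _ => True
  | _ => False

theorem FOForm.IsLocalAtom.isAtomic {φ : FOForm} (h : φ.IsLocalAtom) : φ.IsAtomic := by
  cases φ <;> trivial

namespace GWord

section Sat

variable {U V : GWord}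

theorem sat_iff_of_embedding (f : U.carrier ↪o V.carrier)
    (hlabel : ∀ p, V.label (f p) = U.label p)
    (hconvex : ∀ a b r, f a < r → r < f b → ∃ c, f c = r) {φ : FOForm}
    (hφ : φ.IsLocalAtom) {α : ℕ → Option U.carrier} {β : ℕ → Option V.carrier}
    (hαβ : ∀ y ∈ φ.FV, β y = (α y).map f) : V.Sat β φ ↔ U.Sat α φ := by
  cases φ with
  | top | bot => rfl
  | lab x a =>
    simp only [FOForm.FV, Finset.mem_singleton, forall_eq] at hαβ
    cases hx : α x <;> simp [GWord.Sat, hαβ, hx, hlabel]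
  | eq x y | lt x y | le x y =>
    simp only [FOForm.FV, Finset.mem_insert, Finset.mem_singleton, forall_eq_or_imp,
      forall_eq] at hαβ
    cases hx : α x <;> cases hy : α y <;> simp [GWord.Sat, hαβ, hx, hy]
  | suc x y =>
    simp only [FOForm.FV, Finset.mem_insert, Finset.mem_singleton, forall_eq_or_imp,
      forall_eq] at hαβ
    cases hx : α x <;> cases hy : α y <;> simp [GWord.Sat, hαβ, hx, hy]
    refine fun _ => ⟨fun h c hc => f.le_iff_le.1 (h (f c) (f.lt_iff_lt.2 hc)), fun h r hr => ?_⟩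
    by_contra! hr'
    obtain ⟨c, rfl⟩ := hconvex _ _ r hr hr'
    exact (f.lt_iff_lt.1 hr').not_ge (h c (f.lt_iff_lt.1 hr))
  | _ => exact hφ.elim

variable {α : ℕ → Option U.carrier} {x y : ℕ} {p q : U.carrier}

theorem sat_fmin_iff (hx : α x = some p) : U.Sat α (.fmin x) ↔ ∀ r, p ≤ r := by
  simp [GWord.Sat, hx]

theorem sat_fmax_iff (hx : α x = some p) : U.Sat α (.fmax x) ↔ ∀ r, r ≤ p := by
  simp [GWord.Sat, hx]

theorem sat_suc_iff (hx : α x = some p) (hy : α y = some q) :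
    U.Sat α (.suc x y) ↔ p < q ∧ ∀ r, ¬ (p < r ∧ r < q) := by
  simp [GWord.Sat, hx, hy]

end Sat

variable {k : ℕ} (w : Fin k → GWord)

def inBlock (i : Fin k) : (w i).carrier ↪o (concatFam w).carrier :=
  OrderEmbedding.ofStrictMono (fun p => toLex ⟨i, p⟩) fun _ _ h => Sigma.Lex.right _ _ h

noncomputable def blockVal (A : ℕ → Option (concatFam w).carrier) (j : Fin k) :
    ℕ → Option (w j).carrier :=
  fun z => (A z).bind (Function.partialInv (inBlock w j))

variable {w}

theorem label_inBlock (i : Fin k) (p : (w i).carrier) :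
    (concatFam w).label (inBlock w i p) = (w i).label p := rfl

theorem exists_inBlock_eq (r : (concatFam w).carrier) : ∃ i p, inBlock w i p = r :=
  ⟨(ofLex r).1, (ofLex r).2, rfl⟩

theorem inBlock_lt_inBlock {i j : Fin k} (h : i < j) (p : (w i).carrier) (q : (w j).carrier) :
    inBlock w i p < inBlock w j q :=
  Sigma.Lex.left _ _ h

theorem le_of_inBlock_le {i j : Fin k} {p : (w i).carrier} {q : (w j).carrier}
    (h : inBlock w i p ≤ inBlock w j q) : i ≤ j := by
  rcases Sigma.Lex.le_def.1 h with h | ⟨h, -⟩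
  exacts [h.le, h.le]

theorem eq_of_inBlock_eq {i j : Fin k} {p : (w i).carrier} {q : (w j).carrier}
    (h : inBlock w i p = inBlock w j q) : i = j :=
  le_antisymm (le_of_inBlock_le h.le) (le_of_inBlock_le h.ge)

theorem exists_inBlock_eq_of_between {i : Fin k} {a b : (w i).carrier}
    {r : (concatFam w).carrier} (ha : inBlock w i a < r) (hb : r < inBlock w i b) :
    ∃ c, inBlock w i c = r := by
  obtain ⟨j, c, rfl⟩ := exists_inBlock_eq r
  obtain rfl := le_antisymm (le_of_inBlock_le hb.le) (le_of_inBlock_le ha.le)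
  exact ⟨c, rfl⟩

theorem isEmpty_concatFam_iff : IsEmpty (concatFam w).carrier ↔ ∀ j, IsEmpty (w j).carrier :=
  isEmpty_sigma

theorem forall_inBlock_le_iff {j : Fin k} {p : (w j).carrier} :
    (∀ r, inBlock w j p ≤ r) ↔ (∀ q, p ≤ q) ∧ ∀ m < j, IsEmpty (w m).carrier := by
  refine ⟨fun h => ⟨fun q => (inBlock w j).le_iff_le.1 (h _), fun m hm => ⟨fun c => ?_⟩⟩,
    ?_⟩
  · exact hm.not_ge (le_of_inBlock_le (h (inBlock w m c)))
  · rintro ⟨hp, hempty⟩ r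
    obtain ⟨m, c, rfl⟩ := exists_inBlock_eq r
    rcases lt_trichotomy m j with hm | rfl | hm
    · exact (hempty m hm).elim c
    · exact (inBlock w m).le_iff_le.2 (hp c)
    · exact (inBlock_lt_inBlock hm p c).le

theorem forall_le_inBlock_iff {j : Fin k} {p : (w j).carrier} :
    (∀ r, r ≤ inBlock w j p) ↔
      (∀ q, q ≤ p) ∧ ∀ m, j < m → IsEmpty (w m).carrier := by
  refine ⟨fun h => ⟨fun q => (inBlock w j).le_iff_le.1 (h _), fun m hm => ⟨fun c => ?_⟩⟩,
    ?_⟩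
  · exact hm.not_ge (le_of_inBlock_le (h (inBlock w m c)))
  · rintro ⟨hp, hempty⟩ r
    obtain ⟨m, c, rfl⟩ := exists_inBlock_eq r
    rcases lt_trichotomy m j with hm | rfl | hm
    · exact (inBlock_lt_inBlock hm c p).le
    · exact (inBlock w m).le_iff_le.2 (hp c)
    · exact (hempty m hm).elim c

theorem forall_not_between_inBlock_iff {i j : Fin k} (hij : i < j) {p : (w i).carrier}
    {q : (w j).carrier} : (∀ r, ¬ (inBlock w i p < r ∧ r < inBlock w j q)) ↔
      (∀ p₂, p₂ ≤ p) ∧ (∀ q₂, q ≤ q₂) ∧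
        ∀ m, i < m → m < j → IsEmpty (w m).carrier := by
  refine ⟨fun h => ⟨fun p₂ => ?_, fun q₂ => ?_, fun m him hmj => ⟨fun c => ?_⟩⟩, ?_⟩
  · exact not_lt.1 fun hp => h _ ⟨(inBlock w i).lt_iff_lt.2 hp, inBlock_lt_inBlock hij _ _⟩
  · exact not_lt.1 fun hq => h _ ⟨inBlock_lt_inBlock hij _ _, (inBlock w j).lt_iff_lt.2 hq⟩
  · exact h _ ⟨inBlock_lt_inBlock him p c, inBlock_lt_inBlock hmj c q⟩
  · rintro ⟨hp, hq, hempty⟩ r ⟨hpr, hrq⟩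
    obtain ⟨m, c, rfl⟩ := exists_inBlock_eq r
    rcases (le_of_inBlock_le hpr.le).lt_or_eq with him | rfl
    · rcases (le_of_inBlock_le hrq.le).lt_or_eq with hmj | rfl
      · exact (hempty m him hmj).elim c
      · exact ((inBlock w _).lt_iff_lt.1 hrq).not_ge (hq c)
    · exact ((inBlock w _).lt_iff_lt.1 hpr).not_ge (hp c)

variable {A : ℕ → Option (concatFam w).carrier}

theorem blockVal_eq_some_iff {j : Fin k} {z : ℕ} {p : (w j).carrier} :
    blockVal w A j z = some p ↔ A z = some (inBlock w j p) := by
  have hinv := (inBlock w j).injective.isPartialInv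
  simp only [blockVal, Option.bind_eq_some_iff]
  exact ⟨fun ⟨r, hr, hp⟩ => (hinv _ _).1 hp ▸ hr, fun h => ⟨_, h, (hinv _ _).2 rfl⟩⟩

theorem blockVal_update_self (x : ℕ) {i : Fin k} (a : (w i).carrier) :
    blockVal w (updVal A x (inBlock w i a)) i = updVal (blockVal w A i) x a := by
  funext z
  by_cases hz : z = x
  · simp [updVal, hz, blockVal_eq_some_iff]
  · simp [updVal, hz, blockVal]

theorem blockVal_update_of_ne (x : ℕ) {i j : Fin k} (hij : i ≠ j) (a : (w i).carrier)
    (z : ℕ) :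
    blockVal w (updVal A x (inBlock w i a)) j z = if z = x then none else blockVal w A j z := by
  by_cases hz : z = x
  · simp only [hz, if_true]
    refine Option.eq_none_iff_forall_ne_some.2 fun c hc => hij ?_
    rw [blockVal_eq_some_iff, updVal, if_pos rfl, Option.some_inj] at hc
    exact eq_of_inBlock_eq hc
  · simp [updVal, hz, blockVal]

theorem sat_concatFam_iff_of_local {φ : FOForm} (hφ : φ.IsLocalAtom) {j : Fin k}
    (hA : ∀ y ∈ φ.FV, ∃ p, A y = some (inBlock w j p)) :
    (concatFam w).Sat A φ ↔ (w j).Sat (blockVal w A j) φ := by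
  refine sat_iff_of_embedding (inBlock w j) (label_inBlock j)
    (fun _ _ _ => exists_inBlock_eq_of_between) hφ fun y hy => ?_
  obtain ⟨p, hp⟩ := hA y hy
  rw [hp, (blockVal_eq_some_iff.2 hp : blockVal w A j y = some p), Option.map_some]

theorem sat_fmin_concatFam_iff {x : ℕ} {j : Fin k} {p : (w j).carrier}
    (hx : A x = some (inBlock w j p)) : (concatFam w).Sat A (.fmin x) ↔
      (w j).Sat (blockVal w A j) (.fmin x) ∧ ∀ m < j, IsEmpty (w m).carrier := by
  rw [sat_fmin_iff hx, sat_fmin_iff (blockVal_eq_some_iff.2 hx), forall_inBlock_le_iff]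

theorem sat_fmax_concatFam_iff {x : ℕ} {j : Fin k} {p : (w j).carrier}
    (hx : A x = some (inBlock w j p)) : (concatFam w).Sat A (.fmax x) ↔
      (w j).Sat (blockVal w A j) (.fmax x) ∧ ∀ m, j < m → IsEmpty (w m).carrier := by
  rw [sat_fmax_iff hx, sat_fmax_iff (blockVal_eq_some_iff.2 hx), forall_le_inBlock_iff]

theorem sat_suc_concatFam_iff_of_lt {x y : ℕ} {i j : Fin k} (hij : i < j) {p : (w i).carrier}
    {q : (w j).carrier} (hx : A x = some (inBlock w i p)) (hy : A y = some (inBlock w j q)) :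
    (concatFam w).Sat A (.suc x y) ↔ (w i).Sat (blockVal w A i) (.fmax x) ∧
      (w j).Sat (blockVal w A j) (.fmin y) ∧
        ∀ m, i < m → m < j → IsEmpty (w m).carrier := by
  rw [sat_suc_iff hx hy, sat_fmax_iff (blockVal_eq_some_iff.2 hx),
    sat_fmin_iff (blockVal_eq_some_iff.2 hy), forall_not_between_inBlock_iff hij,
    and_iff_right (inBlock_lt_inBlock hij p q)]

end GWord

open GWord

section Concat

variable {k : ℕ} {w w' : Fin k → GWord} {A : ℕ → Option (concatFam w).carrier}
  {B : ℕ → Option (concatFam w').carrier} {G : Set FOForm}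

def BlockAligned (w w' : Fin k → GWord) (A : ℕ → Option (concatFam w).carrier)
    (B : ℕ → Option (concatFam w').carrier) : Prop :=
  ∀ z, (A z = none ∧ B z = none) ∨
    ∃ j p p', A z = some (inBlock w j p) ∧ B z = some (inBlock w' j p')

namespace BlockAligned

theorem symm (h : BlockAligned w w' A B) : BlockAligned w' w B A := fun z =>
  (h z).imp And.symm fun ⟨j, p, p', hA, hB⟩ => ⟨j, p', p, hB, hA⟩

theorem update (h : BlockAligned w w' A B) (x : ℕ) {i : Fin k} (a : (w i).carrier)
    (b : (w' i).carrier) :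
    BlockAligned w w' (updVal A x (inBlock w i a)) (updVal B x (inBlock w' i b)) := by
  intro z
  by_cases hz : z = x
  · exact .inr ⟨i, a, b, by simp [updVal, hz]⟩
  · simpa [updVal, hz] using h z

theorem exists_inBlock (h : BlockAligned w w' A B) {x : ℕ} {r : (concatFam w).carrier}
    (hx : A x = some r) : ∃ j p p', r = inBlock w j p ∧ B x = some (inBlock w' j p') := by
  rcases h x with ⟨hA, -⟩ | ⟨j, p, p', hA, hB⟩
  · simp [hA] at hx
  · exact ⟨j, p, p', Option.some.inj (hx.symm.trans hA), hB⟩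

theorem exists_right (h : BlockAligned w w' A B) {x : ℕ} {j : Fin k} {p : (w j).carrier}
    (hx : A x = some (inBlock w j p)) : ∃ p', B x = some (inBlock w' j p') := by
  obtain ⟨j₂, p₂, p', he, hB⟩ := h.exists_inBlock hx
  obtain rfl := eq_of_inBlock_eq he
  exact ⟨p', hB⟩

theorem blockVal_eq_none_iff (h : BlockAligned w w' A B) {j : Fin k} {z : ℕ} :
    blockVal w A j z = none ↔ blockVal w' B j z = none := by
  suffices ∀ {w w' : Fin k → GWord} {A : ℕ → Option (concatFam w).carrier}
      {B : ℕ → Option (concatFam w').carrier}, BlockAligned w w' A B →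
      blockVal w' B j z = none → blockVal w A j z = none from ⟨this h.symm, this h⟩
  intro w w' A B h hB
  refine Option.eq_none_iff_forall_ne_some.2 fun p hp => ?_
  obtain ⟨p', hp'⟩ := h.exists_right (blockVal_eq_some_iff.1 hp)
  simp [blockVal_eq_some_iff.2 hp'] at hB

theorem isRestriction_blockVal (h : BlockAligned w w' A B) {j : Fin k}
    {γ : ℕ → Option (w j).carrier} {γ' : ℕ → Option (w' j).carrier}
    (hγ : ∀ z p, A z = some (inBlock w j p) → γ z = some p)
    (hγ' : ∀ z p', B z = some (inBlock w' j p') → γ' z = some p') :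
    IsRestriction (blockVal w A j) (blockVal w' B j) γ γ' := by
  intro z
  cases hz : blockVal w A j z with
  | none => exact .inl ⟨rfl, h.blockVal_eq_none_iff.1 hz⟩
  | some p =>
    have hp := blockVal_eq_some_iff.1 hz
    obtain ⟨p', hp'⟩ := h.exists_right hp
    exact .inr ⟨(hγ z p hp).symm, by rw [blockVal_eq_some_iff.2 hp', hγ' z p' hp']⟩

end BlockAligned

structure ConcatGood (G : Set FOForm) (w w' : Fin k → GWord)
    (A : ℕ → Option (concatFam w).carrier) (B : ℕ → Option (concatFam w').carrier) :
    Prop where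
  closed : ContextClosed G
  sucStable : SucStable G
  aligned : BlockAligned w w' A B
  blockWins : ∀ j, DuplicatorWins ⟨G, w j, w' j, blockVal w A j, blockVal w' B j⟩

namespace ConcatGood

theorem neg (h : ConcatGood G w w' A B) :
    ConcatGood ((FOCtx.notC .hole).preimage G) w' w B A where
  closed := h.closed.preimage _
  sucStable := h.sucStable.preimage _
  aligned := h.aligned.symm
  blockWins j := (h.blockWins j).neg (h.closed.negneg .hole) fun _ hz => by
    simpa [Option.isSome_iff_ne_none, h.aligned.blockVal_eq_none_iff] using hz

theorem block_sat (h : ConcatGood G w w' A B) {φ : FOForm} (hφ : φ ∈ G) (hat : φ.IsAtomic)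
    (j : Fin k) (h1 : (w j).Sat (blockVal w A j) φ) : (w' j).Sat (blockVal w' B j) φ :=
  not_not.1 fun h2 =>
    (h.blockWins j).not_spoilerWinsNow (AtomWinsNow.spoilerWinsNow ⟨φ, hφ, hat, h1, h2⟩)

theorem isEmpty_of_isEmpty (h : ConcatGood G w w' A B) (he : .empt ∈ G) {m : Fin k}
    (hm : IsEmpty (w m).carrier) : IsEmpty (w' m).carrier :=
  h.block_sat he trivial m hm

theorem sat_of_sat_local (h : ConcatGood G w w' A B) {φ : FOForm} (hφ : φ ∈ G)
    (hloc : φ.IsLocalAtom) (j : Fin k) (hvars : ∀ y ∈ φ.FV, ∃ p, A y = some (inBlock w j p))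
    (h1 : (concatFam w).Sat A φ) : (concatFam w').Sat B φ := by
  have hvars' (y) (hy : y ∈ φ.FV) : ∃ p', B y = some (inBlock w' j p') :=
    h.aligned.exists_right (hvars y hy).choose_spec
  rw [sat_concatFam_iff_of_local hloc hvars] at h1
  rw [sat_concatFam_iff_of_local hloc hvars']
  exact h.block_sat hφ hloc.isAtomic j h1

theorem sat_suc_of_lt (h : ConcatGood G w w' A B) {x y : ℕ} (hφ : .suc x y ∈ G) {i j : Fin k}
    (hij : i < j) {p : (w i).carrier} {q : (w j).carrier} {p' : (w' i).carrier}
    {q' : (w' j).carrier} (hx : A x = some (inBlock w i p)) (hy : A y = some (inBlock w j q))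
    (hBx : B x = some (inBlock w' i p')) (hBy : B y = some (inBlock w' j q'))
    (h1 : (concatFam w).Sat A (.suc x y)) : (concatFam w').Sat B (.suc x y) := by
  obtain ⟨-, hmax, hmin⟩ := h.sucStable.1 .hole x y hφ
  have he := h.sucStable.2 .hole x (.inr hmax)
  obtain ⟨hp, hq, hempty⟩ := (sat_suc_concatFam_iff_of_lt hij hx hy).1 h1
  exact (sat_suc_concatFam_iff_of_lt hij hBx hBy).2 ⟨h.block_sat hmax trivial i hp,
    h.block_sat hmin trivial j hq, fun m him hmj => h.isEmpty_of_isEmpty he (hempty m him hmj)⟩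

theorem sat_fmin (h : ConcatGood G w w' A B) {x : ℕ} (hφ : .fmin x ∈ G)
    (h1 : (concatFam w).Sat A (.fmin x)) : (concatFam w').Sat B (.fmin x) := by
  obtain ⟨r, hx, -⟩ := id h1
  obtain ⟨j, p, p', rfl, hBx⟩ := h.aligned.exists_inBlock hx
  have he := h.sucStable.2 .hole x (.inl hφ)
  obtain ⟨hp, hempty⟩ := (sat_fmin_concatFam_iff hx).1 h1
  exact (sat_fmin_concatFam_iff hBx).2
    ⟨h.block_sat hφ trivial j hp, fun m hm => h.isEmpty_of_isEmpty he (hempty m hm)⟩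

theorem sat_fmax (h : ConcatGood G w w' A B) {x : ℕ} (hφ : .fmax x ∈ G)
    (h1 : (concatFam w).Sat A (.fmax x)) : (concatFam w').Sat B (.fmax x) := by
  obtain ⟨r, hx, -⟩ := id h1
  obtain ⟨j, p, p', rfl, hBx⟩ := h.aligned.exists_inBlock hx
  have he := h.sucStable.2 .hole x (.inr hφ)
  obtain ⟨hp, hempty⟩ := (sat_fmax_concatFam_iff hx).1 h1
  exact (sat_fmax_concatFam_iff hBx).2
    ⟨h.block_sat hφ trivial j hp, fun m hm => h.isEmpty_of_isEmpty he (hempty m hm)⟩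

theorem sat_of_sat (h : ConcatGood G w w' A B) {φ : FOForm} (hφ : φ ∈ G) (hat : φ.IsAtomic)
    (h1 : (concatFam w).Sat A φ) : (concatFam w').Sat B φ := by
  have pair {x y : ℕ} {j : Fin k} {p q : (w j).carrier} (hx : A x = some (inBlock w j p))
      (hy : A y = some (inBlock w j q)) :
      ∀ z ∈ ({x, y} : Finset ℕ), ∃ p, A z = some (inBlock w j p) := by
    simpa using ⟨⟨p, hx⟩, ⟨q, hy⟩⟩
  cases φ with
  | top => trivial
  | bot => exact h1
  | empt =>
    exact isEmpty_concatFam_iff.2 fun j => h.isEmpty_of_isEmpty hφ (isEmpty_concatFam_iff.1 h1 j)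
  | eq x y =>
    obtain ⟨r, _, hx, hy, rfl⟩ := id h1
    obtain ⟨j, p, p', rfl, -⟩ := h.aligned.exists_inBlock hx
    exact h.sat_of_sat_local hφ trivial j (pair hx hy) h1
  | lab x a =>
    obtain ⟨r, hx, -⟩ := id h1
    obtain ⟨j, p, p', rfl, -⟩ := h.aligned.exists_inBlock hx
    exact h.sat_of_sat_local hφ trivial j (by simpa [FOForm.FV] using ⟨p, hx⟩) h1
  | lt x y =>
    obtain ⟨r, s, hx, hy, hrs⟩ := id h1
    obtain ⟨i, p, p', rfl, hBx⟩ := h.aligned.exists_inBlock hx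
    obtain ⟨j, q, q', rfl, hBy⟩ := h.aligned.exists_inBlock hy
    rcases lt_trichotomy i j with hij | rfl | hji
    · exact ⟨_, _, hBx, hBy, inBlock_lt_inBlock hij p' q'⟩
    · exact h.sat_of_sat_local hφ trivial i (pair hx hy) h1
    · exact absurd (le_of_inBlock_le hrs.le) hji.not_ge
  | le x y =>
    obtain ⟨r, s, hx, hy, hrs⟩ := id h1
    obtain ⟨i, p, p', rfl, hBx⟩ := h.aligned.exists_inBlock hx
    obtain ⟨j, q, q', rfl, hBy⟩ := h.aligned.exists_inBlock hy
    rcases lt_trichotomy i j with hij | rfl | hji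
    · exact ⟨_, _, hBx, hBy, (inBlock_lt_inBlock hij p' q').le⟩
    · exact h.sat_of_sat_local hφ trivial i (pair hx hy) h1
    · exact absurd (le_of_inBlock_le hrs) hji.not_ge
  | suc x y =>
    obtain ⟨r, s, hx, hy, hrs, -⟩ := id h1
    obtain ⟨i, p, p', rfl, hBx⟩ := h.aligned.exists_inBlock hx
    obtain ⟨j, q, q', rfl, hBy⟩ := h.aligned.exists_inBlock hy
    rcases lt_trichotomy i j with hij | rfl | hji
    · exact h.sat_suc_of_lt hφ hij hx hy hBx hBy h1
    · exact h.sat_of_sat_local hφ trivial i (pair hx hy) h1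
    · exact absurd (le_of_inBlock_le hrs.le) hji.not_ge
  | fmin x => exact h.sat_fmin hφ h1
  | fmax x => exact h.sat_fmax hφ h1
  | _ => exact hat.elim

theorem blockWins_of_ne (h : ConcatGood G w w' A B) {Q : Quant} (hQ : Q = .qex ∨ Q = .qall)
    {x : ℕ} (hne : (reduct Q x G).Nonempty) {i j : Fin k} (hij : i ≠ j) (a : (w i).carrier)
    (b : (w' i).carrier) :
    DuplicatorWins ⟨reduct Q x G, w j, w' j, blockVal w (updVal A x (inBlock w i a)) j,
      blockVal w' (updVal B x (inBlock w' i b)) j⟩ := by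
  have hA := blockVal_update_of_ne (A := A) x hij a
  have hB := blockVal_update_of_ne (A := B) x hij b
  have hrestr {c : (w j).carrier} {d : (w' j).carrier} :
      IsRestriction (blockVal w (updVal A x (inBlock w i a)) j)
        (blockVal w' (updVal B x (inBlock w' i b)) j)
        (updVal (blockVal w A j) x c) (updVal (blockVal w' B j) x d) := fun z => by
    by_cases hz : z = x <;> simp [hA, hB, updVal, hz]
  by_cases hempty : IsEmpty (w j).carrier ∨ IsEmpty (w' j).carrier
  · refine (h.blockWins j).of_isEmpty hempty (h.closed.reduct Q x)
      (fun φ hφ hcl => h.closed.mem_of_mem_reduct hQ hφ hcl) fun z => ?_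
    rcases hempty with hw | hw'
    · exact Option.eq_none_iff_forall_ne_some.2 fun c _ => hw.false c
    · exact ((h.aligned.update x a b).blockVal_eq_none_iff).2
        (Option.eq_none_iff_forall_ne_some.2 fun c _ => hw'.false c)
  obtain ⟨⟨c⟩, ⟨d⟩⟩ := not_or.1 hempty |>.imp not_isEmpty_iff.1 not_isEmpty_iff.1
  rcases hQ with rfl | rfl
  · obtain ⟨d, hd⟩ := (h.blockWins j).movesInto.1 x hne c
    exact hd.anti subset_rfl hrestr
  · obtain ⟨c, hc⟩ := (h.blockWins j).movesInto.2.1 x hne d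
    exact hc.anti subset_rfl hrestr

theorem update (h : ConcatGood G w w' A B) {Q : Quant} (hQ : Q = .qex ∨ Q = .qall) {x : ℕ}
    (hne : (reduct Q x G).Nonempty) {i : Fin k} (a : (w i).carrier) (b : (w' i).carrier)
    (hi : DuplicatorWins ⟨reduct Q x G, w i, w' i, updVal (blockVal w A i) x a,
      updVal (blockVal w' B i) x b⟩) :
    ConcatGood (reduct Q x G) w w' (updVal A x (inBlock w i a))
      (updVal B x (inBlock w' i b)) where
  closed := h.closed.reduct Q x
  sucStable := h.sucStable.reduct Q x
  aligned := h.aligned.update x a b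
  blockWins j := by
    rcases eq_or_ne i j with rfl | hij
    · rwa [blockVal_update_self, blockVal_update_self]
    · exact h.blockWins_of_ne hQ hne hij a b

end ConcatGood

def goodConcatConfigs (k : ℕ) : Set Config :=
  {D | ∃ (G : Set FOForm) (w w' : Fin k → GWord) (A : ℕ → Option (concatFam w).carrier)
    (B : ℕ → Option (concatFam w').carrier),
    ConcatGood G w w' A B ∧ D = ⟨G, concatFam w, concatFam w', A, B⟩}

namespace ConcatGood

theorem exMovesInto (h : ConcatGood G w w' A B) :
    Config.ExMovesInto ⟨G, concatFam w, concatFam w', A, B⟩ (goodConcatConfigs k) := by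
  intro x hne q
  obtain ⟨i, a, rfl⟩ := exists_inBlock_eq q
  obtain ⟨b, hb⟩ := (h.blockWins i).movesInto.1 x hne a
  exact ⟨inBlock w' i b, _, _, _, _, _, h.update (.inl rfl) hne a b hb, rfl⟩

theorem allMovesInto (h : ConcatGood G w w' A B) :
    Config.AllMovesInto ⟨G, concatFam w, concatFam w', A, B⟩ (goodConcatConfigs k) := by
  intro x hne q
  obtain ⟨i, b, rfl⟩ := exists_inBlock_eq q
  obtain ⟨a, ha⟩ := (h.blockWins i).movesInto.2.1 x hne b
  exact ⟨inBlock w i a, _, _, _, _, _, h.update (.inr rfl) hne a b ha, rfl⟩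

theorem duplicatorWins (h : ConcatGood G w w' A B) :
    DuplicatorWins ⟨G, concatFam w, concatFam w', A, B⟩ := by
  refine ⟨goodConcatConfigs k, ⟨_, _, _, _, _, h, rfl⟩, safeInv_of_neg_mem ?_⟩
  rintro _ ⟨G, w, w', A, B, h, rfl⟩
  exact ⟨⟨_, _, _, _, _, h.neg, rfl⟩,
    fun ⟨_, hφ, hat, h1, h2⟩ => h2 (h.sat_of_sat hφ hat h1), h.exMovesInto, h.allMovesInto⟩

end ConcatGood

end Concat

section CombineVal

variable {k : ℕ} {u v : Fin k → GWord} {α : ∀ i : Fin k, ℕ → Option (u i).carrier}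
  {β : ∀ i : Fin k, ℕ → Option (v i).carrier}

theorem combineVal_eq_some {z : ℕ} {j : Fin k} {p : (u j).carrier}
    (h : combineVal u α z = some (inBlock u j p)) : α j z = some p := by
  obtain ⟨i, -, hi⟩ := List.exists_of_findSome?_eq_some h
  obtain ⟨a, ha, hai⟩ := Option.map_eq_some_iff.1 hi
  change inBlock u i a = inBlock u j p at hai
  obtain rfl := eq_of_inBlock_eq hai
  rwa [← (inBlock u i).injective hai]

/-- The first block whose valuation assigns a variable is the same on both sides. -/
theorem blockAligned_combineVal (hαβ : ∀ i z, (α i z).isSome ↔ (β i z).isSome) :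
    BlockAligned u v (combineVal u α) (combineVal v β) := by
  intro z
  unfold combineVal
  induction List.finRange k with
  | nil => exact .inl ⟨rfl, rfl⟩
  | cons i l ih =>
    cases ha : α i z with
    | none =>
      have hb : β i z = none := by simpa [ha] using (hαβ i z).symm
      rw [List.findSome?_cons, List.findSome?_cons, ha, hb]
      exact ih
    | some a =>
      obtain ⟨b, hb⟩ := Option.isSome_iff_exists.1 ((hαβ i z).1 (by simp [ha]))
      exact .inr ⟨i, a, b, by simp only [List.findSome?_cons, ha, hb]; exact ⟨rfl, rfl⟩⟩

end CombineVal

theorem statement_2_general (F : Set FOForm) (hF : IsFragment F) (hsuc : SucStable F)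
    (k : ℕ) (u v : Fin k → GWord) (V : Fin k → Finset ℕ)
    (α : ∀ i : Fin k, ℕ → Option (u i).carrier)
    (β : ∀ i : Fin k, ℕ → Option (v i).carrier)
    (hα : ∀ i : Fin k, ValDom (α i) (V i)) (hβ : ∀ i : Fin k, ValDom (β i) (V i))
    (hwin : ∀ i : Fin k, DuplicatorWins ⟨F, u i, v i, α i, β i⟩) :
    DuplicatorWins
      ⟨F, GWord.concatFam u, GWord.concatFam v, combineVal u α, combineVal v β⟩ := by
  have hal : BlockAligned u v (combineVal u α) (combineVal v β) :=
    blockAligned_combineVal fun i z => (hα i z).trans (hβ i z).symm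
  refine ConcatGood.duplicatorWins ⟨hF.contextClosed, hsuc, hal, fun j => ?_⟩
  exact (hwin j).anti subset_rfl
    (hal.isRestriction_blockVal (fun _ _ => combineVal_eq_some) fun _ _ => combineVal_eq_some)

/-- Proposition on concatenation: if Duplicator wins each of the
configurations `(F, ⟨u_i, α_i⟩, ⟨v_i, β_i⟩)` over mutually disjoint variable sets `V_i`,
then Duplicator wins the configuration on the concatenations with the unions of the
valuations. -/
theorem statement_2 (F : Set FOForm) (hF : IsFragment F) (hsuc : SucStable F)
    (k : ℕ) (u v : Fin k → GWord) (V : Fin k → Finset ℕ)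
    (α : ∀ i : Fin k, ℕ → Option (u i).carrier)
    (β : ∀ i : Fin k, ℕ → Option (v i).carrier)
    (hα : ∀ i : Fin k, ValDom (α i) (V i)) (hβ : ∀ i : Fin k, ValDom (β i) (V i))
    (hdisj : ∀ i j : Fin k, i ≠ j → Disjoint (V i) (V j))
    (hwin : ∀ i : Fin k, DuplicatorWins ⟨F, u i, v i, α i, β i⟩) :
    DuplicatorWins
      ⟨F, GWord.concatFam u, GWord.concatFam v, combineVal u α, combineVal v β⟩ :=
  statement_2_general F hF hsuc k u v V α β hα hβ hwin

end EFGames
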